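/- arXiv:0801.2493 — 2 statements merged into one kernel-verified Lean document; each statement's English description precedes it below -/
import Mathlib

section
/- Let N ≥ 1, B ∈ GL(2, ℤ/Nℤ), g : (ℤ/Nℤ)² → ℝ, and (Uψ)(Q) = exp(2πi·g(Q))·ψ(BQ). Fix ξ ∈ (ℤ/Nℤ)² with orbit [ξ] of size T, and fix an integer j with 1 ≤ j ≤ T. Set λ = exp(2πi·((1/T)·Σ_{n=1}^{T} g(B^n ξ) + j/T)). Define ψ supported on [ξ] by ψ(B^k ξ) = λ^k · exp(−2πi·Σ_{m=0}^{k−1} g(B^m ξ)) for 0 ≤ k < T and ψ(Q) = 0 for Q ∉ [ξ]. Then ψ is well-defined, nonzero, and satisfies Uψ = λψ. -/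
/-!
Since `B` is invertible, `Q ↦ BQ` is a permutation of the finite set `(ℤ/Nℤ)²`, so `ξ` is a
periodic point whose minimal period is `T = #[ξ]`, and a point whose image lies on `[ξ]` lies on
`[ξ]` itself. Along the orbit the eigenvalue equation is the recurrence
`ψ(B^{k+1}ξ) = λ e(-g(B^k ξ)) ψ(B^k ξ)`, solved by `λ^k e(-∑_{m<k} g(B^m ξ))`; the solution closes
up around the cycle exactly when `λ^T = e(∑_{m<T} g(B^m ξ))`, which holds because `T · j/T = j` is
an integer. Off the orbit both sides of the equation vanish.
-/

open scoped BigOperators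

/-- `e x = exp(2πi x)` -/
noncomputable def e (x : ℝ) : ℂ := Complex.exp (2 * Real.pi * Complex.I * x)

open Function Finset

lemma e_add (x y : ℝ) : e (x + y) = e x * e y := by
  simp only [e, ← Complex.exp_add]
  push_cast
  ring_nf

lemma e_zero : e 0 = 1 := by simp [e]

lemma e_intCast (n : ℤ) : e n = 1 := by
  rw [e, Complex.exp_eq_one_iff]
  exact ⟨n, by push_cast; ring⟩

lemma e_pow (x : ℝ) (n : ℕ) : e x ^ n = e (n * x) := by
  rw [e, e, ← Complex.exp_nat_mul]
  push_cast
  ring_nf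

lemma e_inv_mul_add_div_pow {n : ℕ} (hn : n ≠ 0) (s : ℝ) (j : ℤ) :
    e ((n : ℝ)⁻¹ * s + j / n) ^ n = e s := by
  have hn' : (n : ℝ) ≠ 0 := Nat.cast_ne_zero.mpr hn
  rw [e_pow, show (n : ℝ) * ((n : ℝ)⁻¹ * s + j / n) = s + j by field_simp, e_add, e_intCast,
    mul_one]

lemma Finset.sum_Icc_one_eq_sum_range_of_eq {M : Type*} [AddCancelCommMonoid M] {f : ℕ → M}
    {n : ℕ} (h : f n = f 0) : ∑ k ∈ Icc 1 n, f k = ∑ k ∈ range n, f k := by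
  rw [← Ico_add_one_right_eq_Icc, sum_Ico_eq_sum_range, add_tsub_cancel_right]
  have hsum := (sum_range_succ' f n).symm.trans (sum_range_succ f n)
  rw [h] at hsum
  simp_rw [add_comm 1]
  exact add_right_cancel hsum

lemma Matrix.pow_mulVec_eq_iterate {n R : Type*} [Fintype n] [DecidableEq n] [CommSemiring R]
    (M : Matrix n n R) (k : ℕ) (v : n → R) : (M ^ k).mulVec v = M.mulVec^[k] v := by
  induction k generalizing v with
  | zero => simp
  | succ k ih => rw [pow_succ, ← Matrix.mulVec_mulVec, ih, iterate_succ_apply]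

namespace Function

variable {α : Type*} {f : α → α} {x y : α}

theorem ncard_range_iterate (hx : x ∈ periodicPts f) :
    (Set.range fun n => f^[n] x).ncard = minimalPeriod f x := by
  have : (Set.range fun n => f^[n] x) = (fun n => f^[n] x) '' Set.Iio (minimalPeriod f x) := by
    refine (Set.image_subset_range _ _).antisymm' ?_
    rintro _ ⟨n, rfl⟩
    exact ⟨n % minimalPeriod f x, Nat.mod_lt _ (minimalPeriod_pos_of_mem_periodicPts hx),
      iterate_mod_minimalPeriod_eq⟩
  rw [this, iterate_injOn_Iio_minimalPeriod.ncard_image, Set.ncard_Iio_nat]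

theorem Injective.exists_iterate_eq_of_apply_eq_iterate (hf : Injective f)
    (hx : x ∈ periodicPts f) {n : ℕ} (h : f y = f^[n] x) : ∃ m, f^[m] x = y := by
  refine ⟨n + minimalPeriod f x - 1, hf ?_⟩
  rw [h, ← iterate_succ_apply' f, Nat.succ_eq_add_one,
    Nat.sub_add_cancel (by have := minimalPeriod_pos_of_mem_periodicPts hx; omega),
    iterate_add_apply, iterate_minimalPeriod]

theorem apply_mod_minimalPeriod_succ {M : Type*} {c : ℕ → M} (hx : x ∈ periodicPts f)
    (hper : c (minimalPeriod f x) = c 0) (n : ℕ) :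
    c ((n + 1) % minimalPeriod f x) = c (n % minimalPeriod f x + 1) := by
  have hlt := Nat.mod_lt n (minimalPeriod_pos_of_mem_periodicPts hx)
  rw [← Nat.mod_add_mod]
  rcases (show n % minimalPeriod f x + 1 ≤ minimalPeriod f x from hlt).lt_or_eq with h | h
  · rw [Nat.mod_eq_of_lt h]
  · rw [h, Nat.mod_self, hper]

open Classical in
noncomputable def orbitExtend {M : Type*} [Zero M] (f : α → α) (x : α) (c : ℕ → M) (y : α) : M :=
  if h : ∃ n, f^[n] x = y then c (Nat.find h) else 0

variable {M : Type*} [Zero M] {c : ℕ → M}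

open Classical in
theorem orbitExtend_iterate (hx : x ∈ periodicPts f) (n : ℕ) :
    orbitExtend f x c (f^[n] x) = c (n % minimalPeriod f x) := by
  have h : ∃ m, f^[m] x = f^[n] x := ⟨n, rfl⟩
  rw [orbitExtend, dif_pos h]
  have hmod : n % minimalPeriod f x < minimalPeriod f x :=
    Nat.mod_lt _ (minimalPeriod_pos_of_mem_periodicPts hx)
  have hle : Nat.find h ≤ n % minimalPeriod f x := Nat.find_min' h iterate_mod_minimalPeriod_eq
  congr 1
  exact iterate_injOn_Iio_minimalPeriod (hle.trans_lt hmod) hmod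
    ((Nat.find_spec h).trans iterate_mod_minimalPeriod_eq.symm)

theorem orbitExtend_of_not_exists (h : ¬∃ n, f^[n] x = y) : orbitExtend f x c y = 0 := by
  rw [orbitExtend, dif_neg h]

theorem mul_orbitExtend_apply_eq_mul_orbitExtend {R : Type*} [MulZeroClass R] (hf : Injective f)
    (hx : x ∈ periodicPts f) {w : α → R} {lam : R} {c : ℕ → R}
    (hc : ∀ n, w (f^[n] x) * c (n + 1) = lam * c n)
    (hper : c (minimalPeriod f x) = c 0) (y : α) :
    w y * orbitExtend f x c (f y) = lam * orbitExtend f x c y := by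
  by_cases hy : ∃ n, f^[n] x = y
  · obtain ⟨n, rfl⟩ := hy
    rw [← iterate_succ_apply' f, orbitExtend_iterate hx, orbitExtend_iterate hx,
      apply_mod_minimalPeriod_succ hx hper, ← hc, iterate_mod_minimalPeriod_eq]
  · have hfy : ¬∃ n, f^[n] x = f y := fun ⟨n, hn⟩ =>
      hy (hf.exists_iterate_eq_of_apply_eq_iterate hx hn.symm)
    rw [orbitExtend_of_not_exists hy, orbitExtend_of_not_exists hfy, mul_zero, mul_zero]

end Function

noncomputable def twistedPower (lam : ℂ) (s : ℕ → ℝ) (n : ℕ) : ℂ :=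
  lam ^ n * e (-∑ m ∈ range n, s m)

lemma twistedPower_zero (lam : ℂ) (s : ℕ → ℝ) : twistedPower lam s 0 = 1 := by
  simp [twistedPower, e_zero]

lemma e_mul_twistedPower_succ (lam : ℂ) (s : ℕ → ℝ) (n : ℕ) :
    e (s n) * twistedPower lam s (n + 1) = lam * twistedPower lam s n := by
  have h : e (s n) * e (-∑ m ∈ range (n + 1), s m) = e (-∑ m ∈ range n, s m) := by
    rw [← e_add, sum_range_succ]
    ring_nf
  simp only [twistedPower]
  linear_combination lam ^ (n + 1) * h

lemma twistedPower_eq_one {lam : ℂ} {s : ℕ → ℝ} {n : ℕ} (h : lam ^ n = e (∑ m ∈ range n, s m)) :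
    twistedPower lam s n = 1 := by
  rw [twistedPower, h, ← e_add, add_neg_cancel, e_zero]

theorem stmt3_general (N : ℕ) [NeZero N]
    (B : Matrix (Fin 2) (Fin 2) (ZMod N)) (hB : IsUnit B.det)
    (g : (Fin 2 → ZMod N) → ℝ)
    (ξ : Fin 2 → ZMod N)
    (T : ℕ) (hT : T = Set.ncard {Q | ∃ k : ℕ, Q = (B ^ k).mulVec ξ})
    (j : ℕ)
    (lam : ℂ)
    (hlam : lam = e ((T : ℝ)⁻¹ * ∑ n ∈ Finset.Icc 1 T, g ((B ^ n).mulVec ξ) + (j : ℝ) / T)) :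
    ∃ ψ : (Fin 2 → ZMod N) → ℂ,
      ψ ≠ 0 ∧
      (∀ Q, (¬ ∃ k : ℕ, Q = (B ^ k).mulVec ξ) → ψ Q = 0) ∧
      (∀ k, k < T →
        ψ ((B ^ k).mulVec ξ) =
          lam ^ k * e (-(∑ m ∈ Finset.range k, g ((B ^ m).mulVec ξ)))) ∧
      (∀ Q, e (g Q) * ψ (B.mulVec Q) = lam * ψ Q) := by
  have hf : Injective B.mulVec :=
    Matrix.mulVec_injective_of_isUnit ((Matrix.isUnit_iff_isUnit_det B).mpr hB)
  have hξ : ξ ∈ periodicPts B.mulVec := hf.mem_periodicPts ξ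
  simp only [Matrix.pow_mulVec_eq_iterate] at hT hlam ⊢
  obtain rfl : T = minimalPeriod B.mulVec ξ := by
    rw [hT, ← ncard_range_iterate hξ]
    simp only [Set.range, eq_comm]
  set T := minimalPeriod B.mulVec ξ
  set s : ℕ → ℝ := fun m => g (B.mulVec^[m] ξ)
  have hlamT : lam ^ T = e (∑ m ∈ range T, s m) := by
    have hpow := e_inv_mul_add_div_pow (minimalPeriod_pos_of_mem_periodicPts hξ).ne'
      (∑ n ∈ Icc 1 T, s n) j
    push_cast at hpow
    rw [hlam, hpow, sum_Icc_one_eq_sum_range_of_eq]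
    simp only [s, T, iterate_minimalPeriod, iterate_zero_apply]
  refine ⟨orbitExtend B.mulVec ξ (twistedPower lam s), fun h => ?_, fun Q hQ => ?_,
    fun k hk => ?_, ?_⟩
  · have h0 := orbitExtend_iterate (c := twistedPower lam s) hξ 0
    rw [h, Nat.zero_mod, twistedPower_zero] at h0
    exact zero_ne_one h0
  · exact orbitExtend_of_not_exists (by simpa only [eq_comm] using hQ)
  · rw [orbitExtend_iterate hξ, Nat.mod_eq_of_lt hk]
    rfl
  · exact mul_orbitExtend_apply_eq_mul_orbitExtend hf hξ (e_mul_twistedPower_succ lam s)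
      (by rw [twistedPower_zero, twistedPower_eq_one hlamT])

/-- for each `B`-orbit `[ξ]` of size `T` and each `1 ≤ j ≤ T`, with
`λ = exp(2πi((1/T) Σ_{n=1}^T g(B^n ξ) + j/T))`, there is a well-defined nonzero function `ψ`
supported on `[ξ]`, given on the orbit by `ψ(B^k ξ) = λ^k exp(-2πi Σ_{m<k} g(B^m ξ))`,
which is an eigenvector of `U` with eigenvalue `λ`. -/
theorem stmt3 (N : ℕ) [NeZero N] (hN : 1 ≤ N)
    (B : Matrix (Fin 2) (Fin 2) (ZMod N)) (hB : IsUnit B.det)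
    (g : (Fin 2 → ZMod N) → ℝ)
    (ξ : Fin 2 → ZMod N)
    (T : ℕ) (hT : T = Set.ncard {Q | ∃ k : ℕ, Q = (B ^ k).mulVec ξ})
    (j : ℕ) (hj1 : 1 ≤ j) (hjT : j ≤ T)
    (lam : ℂ)
    (hlam : lam = e ((T : ℝ)⁻¹ * ∑ n ∈ Finset.Icc 1 T, g ((B ^ n).mulVec ξ) + (j : ℝ) / T)) :
    ∃ ψ : (Fin 2 → ZMod N) → ℂ,
      ψ ≠ 0 ∧
      (∀ Q, (¬ ∃ k : ℕ, Q = (B ^ k).mulVec ξ) → ψ Q = 0) ∧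
      (∀ k, k < T →
        ψ ((B ^ k).mulVec ξ) =
          lam ^ k * e (-(∑ m ∈ Finset.range k, g ((B ^ m).mulVec ξ)))) ∧
      (∀ Q, e (g Q) * ψ (B.mulVec Q) = lam * ψ Q) :=
  stmt3_general N B hB g ξ T hT j lam hlam
end

section
/- Let g : 𝕋² → ℝ satisfy: for every n ≥ 1, nonzero y ∈ ℤⁿ, distinct rational points x₁,…,xₙ ∈ ℚ²/ℤ², and z ∈ ℚ, Σ_j y_j·g(x_j) ≠ z. Let N ≥ 1 and B ∈ GL(2, ℤ/Nℤ), and define U on L²((ℤ/Nℤ)²) by (Uψ)(Q) = exp(2πi·N·g(Q/N))·ψ(BQ), where Q/N ∈ ℚ²/ℤ² is the rational point determined by Q. Then U has simple spectrum: all N² eigenvalues of U are distinct, i.e., every eigenspace of U is one-dimensional. -/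
/-!
An eigenfunction `χ` of `U` with eigenvalue `μ` satisfies `w Q * χ (B Q) = μ * χ Q` with
`w Q = e (N g(Q/N)) ≠ 0`, so it is determined on each `B`-orbit by one value, and `χ Q ≠ 0` forces
`μ ^ m = ∏_{k<m} w (B^k Q) = e (N ∑_{k<m} g(B^k Q/N))`, where `m` is the order of `B`. If two
`μ`-eigenfunctions did not vanish on two different orbits, the two orbit sums, multiplied by `N`,
would differ by an integer; but that difference is a nontrivial integer combination of values of `g`
at distinct rational points, which genericity forbids. Hence all `μ`-eigenfunctions live on a single
orbit, where they are proportional.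
-/

open scoped BigOperators

open Finset

lemma e_ne_zero (x : ℝ) : e x ≠ 0 := Complex.exp_ne_zero _

lemma e_sum {α : Type*} (s : Finset α) (f : α → ℝ) :
    e (∑ i ∈ s, f i) = ∏ i ∈ s, e (f i) := by
  simp only [e, ← Complex.exp_sum, ← mul_sum]
  norm_cast

lemma exists_int_sub_eq_of_e_eq {a b : ℝ} (h : e a = e b) : ∃ k : ℤ, a - b = k := by
  obtain ⟨k, hk⟩ := Complex.exp_eq_exp_iff_exists_int.mp h
  refine ⟨k, ?_⟩
  have h2πi : 2 * Real.pi * Complex.I ≠ 0 := by simp [Real.pi_ne_zero]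
  have : ((a - b : ℝ) : ℂ) = k := by
    apply mul_left_cancel₀ h2πi
    push_cast
    linear_combination hk
  exact_mod_cast this

namespace Equiv.Perm

variable {X K : Type*} (σ : Perm X) (w : X → K)

theorem prod_range_mul_pow_apply [CommMonoid K] {μ : K} {χ : X → K}
    (hχ : ∀ Q, w Q * χ (σ Q) = μ * χ Q) (n : ℕ) (Q : X) :
    (∏ k ∈ range n, w ((σ ^ k) Q)) * χ ((σ ^ n) Q) = μ ^ n * χ Q := by
  induction n with
  | zero => simp
  | succ n ih =>
    rw [prod_range_succ, pow_succ' σ, Perm.mul_apply, mul_assoc, hχ, mul_left_comm, ih,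
      pow_succ', mul_assoc]

theorem pow_orderOf_eq_prod [CommMonoidWithZero K] [IsCancelMulZero K] {μ : K} {χ : X → K}
    (hχ : ∀ Q, w Q * χ (σ Q) = μ * χ Q) {Q : X} (hQ : χ Q ≠ 0) :
    μ ^ orderOf σ = ∏ k ∈ range (orderOf σ), w ((σ ^ k) Q) := by
  have h := σ.prod_range_mul_pow_apply w hχ (orderOf σ) Q
  rw [pow_orderOf_eq_one, Perm.one_apply] at h
  exact (mul_right_cancel₀ hQ h).symm

theorem eq_smul_of_sameCycle [Finite X] [Field K] (hw : ∀ Q, w Q ≠ 0) {μ : K} {ψ φ : X → K}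
    (hψ : ∀ Q, w Q * ψ (σ Q) = μ * ψ Q) (hφ : ∀ Q, w Q * φ (σ Q) = μ * φ Q) {Q₀ : X}
    (hQ₀ : ψ Q₀ ≠ 0) (hsupp : ∀ Q, ψ Q ≠ 0 ∨ φ Q ≠ 0 → σ.SameCycle Q₀ Q) :
    φ = (φ Q₀ / ψ Q₀) • ψ := by
  funext Q
  by_cases hQ : σ.SameCycle Q₀ Q
  · obtain ⟨n, rfl⟩ := hQ.exists_nat_pow_eq
    have hprod : ∏ k ∈ range n, w ((σ ^ k) Q₀) ≠ 0 := prod_ne_zero_iff.mpr fun k _ => hw _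
    apply mul_left_cancel₀ hprod
    rw [Pi.smul_apply, smul_eq_mul, mul_left_comm, σ.prod_range_mul_pow_apply w hφ,
      σ.prod_range_mul_pow_apply w hψ]
    field_simp
  · obtain ⟨hψQ, hφQ⟩ := not_or.mp (mt (hsupp Q) hQ)
    simp [not_not.mp hψQ, not_not.mp hφQ]

end Equiv.Perm

def IsGeneric (g : (Fin 2 → ℝ) → ℝ) : Prop :=
  ∀ n : ℕ, 1 ≤ n → ∀ y : Fin n → ℤ, y ≠ 0 →
    ∀ x : Fin n → (Fin 2 → ℝ), (∀ i l, ∃ q : ℚ, x i l = (q : ℝ)) →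
      (∀ i j, i ≠ j → ¬ ∀ l, ∃ k : ℤ, x i l - x j l = (k : ℝ)) →
    ∀ z : ℚ, ∑ i, (y i : ℝ) * g (x i) ≠ (z : ℝ)

namespace IsGeneric

variable {g : (Fin 2 → ℝ) → ℝ} {X : Type*} [Fintype X] {x : X → Fin 2 → ℝ}

theorem sum_ne (hg : IsGeneric g) (hrat : ∀ v l, ∃ q : ℚ, x v l = q)
    (hdist : ∀ v v', v ≠ v' → ¬ ∀ l, ∃ k : ℤ, x v l - x v' l = k) {y : X → ℤ} (hy : y ≠ 0)
    (z : ℚ) : ∑ v, (y v : ℝ) * g (x v) ≠ z := by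
  have : Nonempty X := by
    by_contra hX
    rw [not_nonempty_iff] at hX
    exact hy (Subsingleton.elim _ _)
  let eX := Fintype.equivFin X
  rw [← eX.symm.sum_comp]
  refine hg _ Fintype.card_pos (y ∘ eX.symm) ?_ (x ∘ eX.symm) (fun i l => hrat _ l)
    (fun i j hij => hdist _ _ (eX.symm.injective.ne hij)) z
  intro h
  apply hy
  funext v
  simpa using congrFun h (eX v)

theorem sameCycle_of_e_eq [DecidableEq X] (hg : IsGeneric g) (hrat : ∀ v l, ∃ q : ℚ, x v l = q)
    (hdist : ∀ v v', v ≠ v' → ¬ ∀ l, ∃ k : ℤ, x v l - x v' l = k) (σ : Equiv.Perm X)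
    {a : ℤ} (ha : a ≠ 0) {Q Q' : X}
    (h : e (a * ∑ k ∈ range (orderOf σ), g (x ((σ ^ k) Q)))
      = e (a * ∑ k ∈ range (orderOf σ), g (x ((σ ^ k) Q')))) :
    σ.SameCycle Q Q' := by
  by_contra hQQ'
  obtain ⟨K, hK⟩ := exists_int_sub_eq_of_e_eq h
  set visits : X → X → ℕ := fun P v => #{k ∈ range (orderOf σ) | (σ ^ k) P = v}
  have hsum : ∀ P, ∑ k ∈ range (orderOf σ), g (x ((σ ^ k) P))
      = ∑ v, (visits P v : ℝ) * g (x v) := by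
    intro P
    refine (sum_fiberwise' (range (orderOf σ)) (fun k => (σ ^ k) P) (g ∘ x)).symm.trans ?_
    simp [visits, sum_const, nsmul_eq_mul]
  refine hg.sum_ne hrat hdist (y := fun v => a * (visits Q v - visits Q' v)) ?_ K ?_
  · have hvisit : 0 < visits Q Q :=
      card_pos.mpr ⟨0, mem_filter.mpr ⟨mem_range.mpr (orderOf_pos σ), rfl⟩⟩
    have hnovisit : visits Q' Q = 0 := by
      refine card_eq_zero.mpr (filter_eq_empty_iff.mpr fun k _ hk => hQQ' ?_)
      exact (Equiv.Perm.SameCycle.symm ⟨k, by simpa using hk⟩)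
    intro hy
    have := congrFun hy Q
    simp [hnovisit, ha, hvisit.ne'] at this
  · rw [Rat.cast_intCast, ← hK, hsum, hsum, mul_sum, mul_sum, ← sum_sub_distrib]
    refine sum_congr rfl fun v _ => ?_
    push_cast
    ring

end IsGeneric

theorem ZMod.eq_of_val_div_sub_val_div_eq_int {N : ℕ} [NeZero N] {a b : ZMod N} {k : ℤ}
    (h : (a.val : ℝ) / N - (b.val : ℝ) / N = k) : a = b := by
  have hN : (N : ℝ) ≠ 0 := NeZero.ne _
  have hℤ : (a.val : ℤ) - b.val = k * N := by
    rw [← sub_div, div_eq_iff hN] at h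
    exact_mod_cast h
  have ha := a.val_lt
  have hb := b.val_lt
  have hN₀ : (0 : ℤ) < N := by exact_mod_cast Nat.pos_of_neZero N
  have hk₁ : k < 1 := lt_of_mul_lt_mul_right (a := (N : ℤ)) (by omega) hN₀.le
  have hk₂ : -1 < k := lt_of_mul_lt_mul_right (a := (N : ℤ)) (by omega) hN₀.le
  obtain rfl : k = 0 := by omega
  apply ZMod.val_injective
  omega

theorem stmt10_general (g : (Fin 2 → ℝ) → ℝ)
    (hg : ∀ n : ℕ, 1 ≤ n → ∀ y : Fin n → ℤ, y ≠ 0 →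
      ∀ x : Fin n → (Fin 2 → ℝ), (∀ i l, ∃ q : ℚ, x i l = (q : ℝ)) →
        (∀ i j, i ≠ j → ¬ ∀ l, ∃ k : ℤ, x i l - x j l = (k : ℝ)) →
      ∀ z : ℚ, ∑ i, (y i : ℝ) * g (x i) ≠ (z : ℝ))
    (N : ℕ) [NeZero N]
    (B : Matrix (Fin 2) (Fin 2) (ZMod N)) (hB : IsUnit B.det)
    (U : ((Fin 2 → ZMod N) → ℂ) → ((Fin 2 → ZMod N) → ℂ))
    (hU : ∀ ψ Q, U ψ Q =
      e ((N : ℝ) * g (fun i => ((Q i).val : ℝ) / N)) * ψ (B.mulVec Q)) :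
    ∀ (μ : ℂ) (ψ φ : (Fin 2 → ZMod N) → ℂ), ψ ≠ 0 → φ ≠ 0 →
      U ψ = μ • ψ → U φ = μ • φ → ∃ c : ℂ, φ = c • ψ := by
  intro μ ψ φ hψ _ hψμ hφμ
  let σ : Equiv.Perm (Fin 2 → ZMod N) := Equiv.ofBijective B.mulVec <|
    Finite.surjective_iff_bijective.mp <| Matrix.mulVec_surjective_iff_isUnit.mpr <|
      (Matrix.isUnit_iff_isUnit_det B).mpr hB
  let x : (Fin 2 → ZMod N) → Fin 2 → ℝ := fun Q i => ((Q i).val : ℝ) / N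
  let w Q := e (N * g (x Q))
  have eigen : ∀ χ, U χ = μ • χ → ∀ Q, w Q * χ (σ Q) = μ * χ Q :=
    fun χ hχ Q => (hU χ Q).symm.trans (congrFun hχ Q)
  have sameCycle : ∀ χ χ', U χ = μ • χ → U χ' = μ • χ' →
      ∀ Q Q', χ Q ≠ 0 → χ' Q' ≠ 0 → σ.SameCycle Q Q' := by
    intro χ χ' hχ hχ' Q Q' hQ hQ'
    refine IsGeneric.sameCycle_of_e_eq (x := x) hg
      (fun Q l => ⟨((Q l).val : ℚ) / N, by push_cast; rfl⟩)
      (fun Q Q' hne hint => hne <| funext fun l =>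
        (hint l).elim fun _ hk => ZMod.eq_of_val_div_sub_val_div_eq_int hk)
      σ (a := N) (NeZero.ne _) ?_
    rw [Int.cast_natCast, mul_sum, mul_sum, e_sum, e_sum,
      ← σ.pow_orderOf_eq_prod w (eigen χ hχ) hQ, ← σ.pow_orderOf_eq_prod w (eigen χ' hχ') hQ']
  obtain ⟨Q₀, hQ₀⟩ := Function.ne_iff.mp hψ
  exact ⟨_, σ.eq_smul_of_sameCycle w (fun _ => e_ne_zero _) (eigen ψ hψμ) (eigen φ hφμ) hQ₀
    fun Q hQ => hQ.elim (sameCycle ψ ψ hψμ hψμ Q₀ Q hQ₀) (sameCycle ψ φ hψμ hφμ Q₀ Q hQ₀)⟩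

/-- if `g : 𝕋² → ℝ` takes no rational value on nontrivial integer combinations
of distinct rational points, then the quantum propagator
`(Uψ)(Q) = exp(2πi N g(Q/N)) ψ(BQ)` on `L²((ℤ/Nℤ)²)` has simple spectrum: every
eigenspace is one-dimensional. -/
theorem stmt10 (g : (Fin 2 → ℝ) → ℝ)
    (hper : ∀ v m : Fin 2 → ℝ, (∀ i, ∃ k : ℤ, m i = (k : ℝ)) → g (v + m) = g v)
    (hg : ∀ n : ℕ, 1 ≤ n → ∀ y : Fin n → ℤ, y ≠ 0 →
      ∀ x : Fin n → (Fin 2 → ℝ), (∀ i l, ∃ q : ℚ, x i l = (q : ℝ)) →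
        (∀ i j, i ≠ j → ¬ ∀ l, ∃ k : ℤ, x i l - x j l = (k : ℝ)) →
      ∀ z : ℚ, ∑ i, (y i : ℝ) * g (x i) ≠ (z : ℝ))
    (N : ℕ) [NeZero N] (hN : 1 ≤ N)
    (B : Matrix (Fin 2) (Fin 2) (ZMod N)) (hB : IsUnit B.det)
    (U : ((Fin 2 → ZMod N) → ℂ) → ((Fin 2 → ZMod N) → ℂ))
    (hU : ∀ ψ Q, U ψ Q =
      e ((N : ℝ) * g (fun i => ((Q i).val : ℝ) / N)) * ψ (B.mulVec Q)) :
    ∀ (μ : ℂ) (ψ φ : (Fin 2 → ZMod N) → ℂ), ψ ≠ 0 → φ ≠ 0 →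
      U ψ = μ • ψ → U φ = μ • φ → ∃ c : ℂ, φ = c • ψ :=
  stmt10_general g hg N B hB U hU
end
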